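/- Let k ≥ 2, α, β, μ > 0, let ℓ ≥ 3 be odd, and set θ = min{α/4, β/(2ℓ)}. If Ψ is a k-uniform (α, β, ℓ, μ)-constellation on n ≥ 6k vertices and S, X ⊆ V(Ψ) are disjoint with |S| ≤ k − 2 and |X| ≤ θn, then the constellation Ψ_S − X (the link constellation of S with the vertices of X removed) is an (α/2, β/2, ℓ, 2μ)-constellation. -/

import Mathlib

open Finset

structure Constellation (V : Type*) [DecidableEq V] where
  verts : Finset V
  edges : Finset (Finset V)
  W : Finset V → Finset V

namespace Constellation

variable {V : Type*} [DecidableEq V]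

/-- The link constellation `Ψ_S`. -/
def link (Ψ : Constellation V) (S : Finset V) : Constellation V where
  verts := Ψ.verts \ S
  edges := (Ψ.edges.filter fun e => S ⊆ e).image (· \ S)
  W := fun x => Ψ.W (x ∪ S) \ S

/-- The induced subconstellation `Ψ[X]`. -/
def induce (Ψ : Constellation V) (X : Finset V) : Constellation V where
  verts := Ψ.verts ∩ X
  edges := Ψ.edges.filter fun e => e ⊆ X
  W := fun x => Ψ.W x ∩ X

/-- `Ψ - X`. -/
def remove (Ψ : Constellation V) (X : Finset V) : Constellation V :=
  Ψ.induce (Ψ.verts \ X)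

end Constellation

/-- `Ψ` is a `k`-uniform constellation. -/
def IsUniformConst {V : Type*} [DecidableEq V] (k : ℕ) (Ψ : Constellation V) : Prop :=
  ∀ e ∈ Ψ.edges, e ⊆ Ψ.verts ∧ e.card = k

/-- `ζ`-leftconnectability of a `(k-1)`-tuple (as a list) in a `k`-uniform constellation. -/
def LeftConn {V : Type*} [DecidableEq V] : ℕ → Constellation V → ℝ → List V → Prop
  | 0, _, _, _ => False
  | 1, _, _, _ => False
  | 2, Ψ, _, xs => xs.length = 1 ∧ ∀ v ∈ xs, v ∈ Ψ.W ∅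
  | (k + 3), Ψ, ζ, xs =>
      xs.length = k + 2 ∧
      ζ * (Ψ.verts.card : ℝ) ≤
        (({z : V | z ∈ Ψ.verts ∧ insert z xs.toFinset ∈ Ψ.edges ∧
            LeftConn (k + 2) (Ψ.link {z}) ζ xs.tail} : Set V).ncard : ℝ)

def RightConn {V : Type*} [DecidableEq V] (k : ℕ) (Ψ : Constellation V) (ζ : ℝ)
    (xs : List V) : Prop :=
  LeftConn k Ψ ζ xs.reverse

def Conn {V : Type*} [DecidableEq V] (k : ℕ) (Ψ : Constellation V) (ζ : ℝ)
    (xs : List V) : Prop :=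
  LeftConn k Ψ ζ xs ∧ RightConn k Ψ ζ xs

/-- A `ζ`-bridge. -/
def IsBridge {V : Type*} [DecidableEq V] (k : ℕ) (Ψ : Constellation V) (ζ : ℝ)
    (x : Fin k → V) : Prop :=
  Finset.image x Finset.univ ∈ Ψ.edges ∧
  RightConn k Ψ ζ (List.ofFn x).dropLast ∧
  LeftConn k Ψ ζ (List.ofFn x).tail

/-- number of edges of the link graph of `x` crossing between `V(R_x)` and its complement. -/
def crossCount {V : Type*} [DecidableEq V] (Ψ : Constellation V) (x : Finset V) : ℕ :=
  ((Ψ.link x).edges.filter fun p => (p ∩ Ψ.W x).Nonempty ∧ (p \ Ψ.W x).Nonempty).card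

/-- `Ψ` is an `(α, μ)`-constellation. -/
def IsAMConst {V : Type*} [DecidableEq V] (k : ℕ) (Ψ : Constellation V) (α μ : ℝ) : Prop :=
  IsUniformConst k Ψ ∧
  ∀ x : Finset V, x ⊆ Ψ.verts → x.card = k - 2 →
    ((5 / 9 + α) * (Ψ.verts.card : ℝ) ^ 2 / 2 ≤
        ((Ψ.edges.filter fun e => x ⊆ e).card : ℝ)) ∧
    Ψ.W x ⊆ Ψ.verts ∧
    ((2 / 3 + α / 2) * (Ψ.verts.card : ℝ) ≤ ((Ψ.W x).card : ℝ)) ∧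
    ((crossCount Ψ x : ℝ) ≤ μ * (Ψ.verts.card : ℝ) ^ 2)

/-- number of `y`-`z`-paths of length `ℓ` in `R_x`. -/
noncomputable def pathCount {V : Type*} [DecidableEq V] (Ψ : Constellation V) (x : Finset V)
    (y z : V) (ℓ : ℕ) : ℕ :=
  ({ l : List V | l.length = ℓ + 1 ∧ l.Nodup ∧ (∀ v ∈ l, v ∈ Ψ.W x) ∧
      l.head? = some y ∧ l.getLast? = some z ∧
      l.Chain' (fun u v => ({u, v} : Finset V) ∈ (Ψ.link x).edges) } : Set (List V)).ncard

/-- `Ψ` is an `(α, β, ℓ, μ)`-constellation. -/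
def IsConst {V : Type*} [DecidableEq V] (k : ℕ) (Ψ : Constellation V)
    (α β : ℝ) (ℓ : ℕ) (μ : ℝ) : Prop :=
  IsAMConst k Ψ α μ ∧
  ∀ x : Finset V, x ⊆ Ψ.verts → x.card = k - 2 →
    ∀ y ∈ Ψ.W x, ∀ z ∈ Ψ.W x, y ≠ z →
      β * (Ψ.verts.card : ℝ) ^ (ℓ - 1) ≤ (pathCount Ψ x y z ℓ : ℝ)

/-- `x` is a walk (of `m` vertices) in the `k`-uniform hypergraph with edge set `E`. -/
def IsWalk {V : Type*} [DecidableEq V] (E : Finset (Finset V)) (k m : ℕ)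
    (x : Fin m → V) : Prop :=
  ∀ i : ℕ, ∀ h : i + k ≤ m,
    Finset.image (fun j : Fin k => x ⟨i + j.1, by have := j.2; omega⟩) Finset.univ ∈ E

/-- `l` is a path in the `k`-uniform hypergraph with edge set `E`. -/
def IsPathList {V : Type*} [DecidableEq V] (E : Finset (Finset V)) (k : ℕ)
    (l : List V) : Prop :=
  l.Nodup ∧ ∀ i : ℕ, i + k ≤ l.length → ((l.drop i).take k).toFinset ∈ E

/-!
Passing to `Ψ_S − X` replaces a `(k-2)`-set `x` by `x ∪ S` in `Ψ` and deletes the vertices of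
`X`, which is cheap when `|X| ≤ θn`: at most `|X| n ≤ αn²/4` edges through `x ∪ S` meet `X`;
`R_{x ∪ S}` loses at most `|X| ≤ αn/4` vertices and none of `S`, because `R_x` is disjoint from `x`
(every vertex of `R_x` starts a path, whose first edge lies in the link of `x`); crossing edges
can only disappear; and a `y`–`z` path of length `ℓ` meeting `X` is determined by its `ℓ - 1`
interior vertices, one of which lies in `X`, so at most `(ℓ - 1)|X|n^(ℓ-2) ≤ βn^(ℓ-1)/2` paths
are lost. Finally `n' = n - |S| - |X| ≥ (1 - 1/6 - 1/9)n = 13n/18`, using `|S| ≤ n/6` and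
`α ≤ 4/9` (forced by the codegree condition), and `(13/18)² > 1/2` absorbs the change from `n`
to `n'` in the bound on crossing edges.
-/

section ListsOver

variable {α : Type*}

def listsOver (T : Finset α) (p : ℕ) : Set (List α) :=
  {l | l.length = p ∧ ∀ v ∈ l, v ∈ T}

lemma listsOver_zero (T : Finset α) : listsOver T 0 = {[]} := by
  ext l
  simp +contextual [listsOver, List.length_eq_zero_iff]

lemma listsOver_succ (T : Finset α) (p : ℕ) :
    listsOver T (p + 1) =
      (fun q : α × List α => q.1 :: q.2) '' ((T : Set α) ×ˢ listsOver T p) := by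
  ext l
  cases l
  · simp [listsOver]
  · simp [listsOver]; tauto

lemma listsOver_finite (T : Finset α) (p : ℕ) : (listsOver T p).Finite := by
  induction p with
  | zero => simp [listsOver_zero]
  | succ p ih => rw [listsOver_succ]; exact (T.finite_toSet.prod ih).image _

lemma ncard_image_cons_le (A : Finset α) {L : Set (List α)} (hL : L.Finite) :
    ((fun q : α × List α => q.1 :: q.2) '' ((A : Set α) ×ˢ L)).ncard ≤ #A * L.ncard := by
  rw [← Set.ncard_coe_finset A, ← Set.ncard_prod]
  exact Set.ncard_image_le (A.finite_toSet.prod hL)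

lemma ncard_listsOver_le (T : Finset α) (p : ℕ) : (listsOver T p).ncard ≤ #T ^ p := by
  induction p with
  | zero => simp [listsOver_zero]
  | succ p ih =>
    rw [listsOver_succ, pow_succ']
    exact (ncard_image_cons_le T (listsOver_finite T p)).trans (Nat.mul_le_mul_left _ ih)

lemma ncard_listsOver_meeting_le (T X : Finset α) (p : ℕ) :
    {l ∈ listsOver T p | ∃ v ∈ l, v ∈ X}.ncard ≤ p * #X * #T ^ (p - 1) := by
  induction p with
  | zero =>
    rw [Nat.zero_mul, Nat.zero_mul, Nat.le_zero, listsOver_zero]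
    convert Set.ncard_empty (List α)
    ext l
    simp +contextual
  | succ p ih =>
    set M := {l ∈ listsOver T p | ∃ v ∈ l, v ∈ X}
    have hM : M.Finite := (listsOver_finite T p).subset fun _ hl => hl.1
    have hcover : {l ∈ listsOver T (p + 1) | ∃ v ∈ l, v ∈ X} ⊆
        (fun q : α × List α => q.1 :: q.2) '' ((X : Set α) ×ˢ listsOver T p) ∪
        (fun q : α × List α => q.1 :: q.2) '' ((T : Set α) ×ˢ M) := by
      rintro _ ⟨hl, v, hv, hvX⟩
      rw [listsOver_succ] at hl
      obtain ⟨⟨a, t⟩, ⟨haT, ht⟩, rfl⟩ := hl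
      rcases List.mem_cons.1 hv with rfl | hvt
      · exact Or.inl ⟨(v, t), ⟨hvX, ht⟩, rfl⟩
      · exact Or.inr ⟨(a, t), ⟨haT, ht, v, hvt, hvX⟩, rfl⟩
    have hpow : #T * (p * #X * #T ^ (p - 1)) = p * #X * #T ^ p := by
      rcases p with _ | p
      · simp
      · simp only [Nat.add_sub_cancel, pow_succ]; ring
    calc _ ≤ _ := Set.ncard_le_ncard hcover
          (((X.finite_toSet.prod (listsOver_finite T p)).image _).union
            ((T.finite_toSet.prod hM).image _))
      _ ≤ #X * #T ^ p + #T * (p * #X * #T ^ (p - 1)) := (Set.ncard_union_le _ _).trans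
          (add_le_add ((ncard_image_cons_le X (listsOver_finite T p)).trans
              (Nat.mul_le_mul_left _ (ncard_listsOver_le T p)))
            ((ncard_image_cons_le T hM).trans (Nat.mul_le_mul_left _ ih)))
      _ = (p + 1) * #X * #T ^ (p + 1 - 1) := by rw [hpow, Nat.add_sub_cancel]; ring

end ListsOver

lemma List.eq_cons_append_of_head?_of_getLast? {α : Type*} {l : List α} {y z : α}
    (hlen : 2 ≤ l.length) (hy : l.head? = some y) (hz : l.getLast? = some z) :
    l = y :: (l.tail.dropLast ++ [z]) := by
  rcases l with _ | ⟨a, _ | ⟨b, t⟩⟩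
  · simp at hlen
  · simp at hlen
  · simp only [List.head?_cons, Option.some.injEq] at hy
    subst hy
    rw [List.getLast?_cons_cons] at hz
    simp [List.dropLast_append_getLast? _ hz]

lemma Finset.card_filter_not_disjoint_le {α : Type*} [DecidableEq α] {L : Finset (Finset α)}
    {T X : Finset α} (hL : ∀ p ∈ L, p ⊆ T ∧ #p = 2) :
    #{p ∈ L | ¬Disjoint p X} ≤ #X * #T := by
  calc #{p ∈ L | ¬Disjoint p X} ≤ #((X ×ˢ T).image fun q => {q.1, q.2}) := by
        refine card_le_card fun p hp => ?_
        obtain ⟨hpL, hpX⟩ := mem_filter.1 hp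
        obtain ⟨v, hvp, hvX⟩ := not_disjoint_iff.1 hpX
        obtain ⟨a, b, -, rfl⟩ := card_eq_two.1 (hL p hpL).2
        have hpT := (hL _ hpL).1
        simp only [mem_insert, mem_singleton] at hvp
        rcases hvp with rfl | rfl
        · exact mem_image.2 ⟨(v, b), mem_product.2 ⟨hvX, hpT (by simp)⟩, rfl⟩
        · exact mem_image.2 ⟨(v, a), mem_product.2 ⟨hvX, hpT (by simp)⟩, pair_comm _ _⟩
    _ ≤ #X * #T := card_image_le.trans (card_product _ _).le

namespace Constellation

variable {V : Type*} [DecidableEq V] {Ψ : Constellation V} {S X x : Finset V}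

@[simp]
lemma mem_link_edges {p : Finset V} :
    p ∈ (Ψ.link S).edges ↔ ∃ e ∈ Ψ.edges, S ⊆ e ∧ e \ S = p := by
  simp [link, and_assoc]

@[simp]
lemma mem_remove_edges {f : Finset V} :
    f ∈ (Ψ.remove X).edges ↔ f ∈ Ψ.edges ∧ f ⊆ Ψ.verts \ X :=
  mem_filter

lemma card_link_edges (Ψ : Constellation V) (S : Finset V) :
    #(Ψ.link S).edges = #{e ∈ Ψ.edges | S ⊆ e} := by
  refine card_image_of_injOn fun e he f hf hef => ?_
  simp only [coe_filter] at he hf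
  rw [← sdiff_union_of_subset he.2, ← sdiff_union_of_subset hf.2]
  exact congrArg (· ∪ S) hef

lemma remove_link_verts (Ψ : Constellation V) (S X : Finset V) :
    ((Ψ.link S).remove X).verts = (Ψ.verts \ S) \ X :=
  inter_eq_right.2 sdiff_subset

lemma subset_remove_link_verts_iff :
    x ⊆ ((Ψ.link S).remove X).verts ↔ (x ⊆ Ψ.verts ∧ Disjoint x S) ∧ Disjoint x X := by
  rw [remove_link_verts, subset_sdiff, subset_sdiff]

lemma card_remove_link_verts (hSV : S ⊆ Ψ.verts) (hXV : X ⊆ Ψ.verts) (hSX : Disjoint S X) :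
    #((Ψ.link S).remove X).verts + #S + #X = #Ψ.verts := by
  have hXVS : X ⊆ Ψ.verts \ S := subset_sdiff.2 ⟨hXV, hSX.symm⟩
  have := card_le_card hXVS
  rw [card_sdiff_of_subset hSV] at this
  rw [remove_link_verts, card_sdiff_of_subset hXVS, card_sdiff_of_subset hSV]
  have := card_le_card hSV
  omega

lemma remove_link_W (hW : Ψ.W (x ∪ S) ⊆ Ψ.verts \ S) :
    ((Ψ.link S).remove X).W x = Ψ.W (x ∪ S) \ X := by
  ext v
  have := @hW v
  simp only [remove, induce, link, mem_inter, mem_sdiff] at this ⊢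
  tauto

lemma mem_link_remove_link_edges (hE : ∀ e ∈ Ψ.edges, e ⊆ Ψ.verts) (hxS : Disjoint x S)
    (hxX : Disjoint x X) {p : Finset V} :
    p ∈ (((Ψ.link S).remove X).link x).edges ↔ p ∈ (Ψ.link (x ∪ S)).edges ∧ Disjoint p X := by
  have hsdiff (e : Finset V) : e \ (x ∪ S) = (e \ S) \ x := by rw [sdiff_sdiff_left, sup_comm]; rfl
  simp only [mem_link_edges, mem_remove_edges]
  constructor
  · rintro ⟨_, ⟨⟨e, he, hSe, rfl⟩, heX⟩, hxe, rfl⟩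
    refine ⟨⟨e, he, union_subset (hxe.trans sdiff_subset) hSe, hsdiff e⟩, ?_⟩
    exact disjoint_of_subset_left (sdiff_subset.trans heX) disjoint_sdiff_self_left
  · rintro ⟨⟨e, he, hxSe, rfl⟩, hpX⟩
    refine ⟨e \ S, ⟨⟨e, he, subset_union_right.trans hxSe, rfl⟩, fun v hv => ?_⟩,
      subset_sdiff.2 ⟨subset_union_left.trans hxSe, hxS⟩, (hsdiff e).symm⟩
    obtain ⟨hve, hvS⟩ := mem_sdiff.1 hv
    refine mem_sdiff.2 ⟨mem_sdiff.2 ⟨hE e he hve, hvS⟩, fun hvX => ?_⟩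
    by_cases hvx : v ∈ x
    · exact disjoint_left.1 hxX hvx hvX
    · exact disjoint_left.1 hpX (by simp [hve, hvx, hvS]) hvX

lemma crossCount_remove_link_le (hE : ∀ e ∈ Ψ.edges, e ⊆ Ψ.verts) (hxS : Disjoint x S)
    (hxX : Disjoint x X) (hW : Ψ.W (x ∪ S) ⊆ Ψ.verts \ S) :
    crossCount ((Ψ.link S).remove X) x ≤ crossCount Ψ (x ∪ S) := by
  unfold crossCount
  rw [remove_link_W hW]
  refine card_le_card fun p hp => ?_
  obtain ⟨hpE, ⟨u, hu⟩, ⟨w, hw⟩⟩ := mem_filter.1 hp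
  obtain ⟨hpE, hpX⟩ := (mem_link_remove_link_edges hE hxS hxX).1 hpE
  simp only [mem_inter, mem_sdiff, not_and, not_not] at hu hw
  exact mem_filter.2 ⟨hpE, ⟨u, mem_inter.2 ⟨hu.1, hu.2.1⟩⟩,
    ⟨w, mem_sdiff.2 ⟨hw.1, fun hwW => disjoint_left.1 hpX hw.1 (hw.2 hwW)⟩⟩⟩

def pathSet (Ψ : Constellation V) (x : Finset V) (y z : V) (ℓ : ℕ) : Set (List V) :=
  {l | l.length = ℓ + 1 ∧ l.Nodup ∧ (∀ v ∈ l, v ∈ Ψ.W x) ∧ l.head? = some y ∧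
    l.getLast? = some z ∧ l.IsChain (fun u v => ({u, v} : Finset V) ∈ (Ψ.link x).edges)}

lemma pathCount_eq_ncard_pathSet (y z : V) (ℓ : ℕ) :
    pathCount Ψ x y z ℓ = (Ψ.pathSet x y z ℓ).ncard := rfl

lemma pathSet_finite (Ψ : Constellation V) (x : Finset V) (y z : V) (ℓ : ℕ) :
    (Ψ.pathSet x y z ℓ).Finite :=
  (listsOver_finite (Ψ.W x) (ℓ + 1)).subset fun _ hl => ⟨hl.1, hl.2.2.1⟩

lemma notMem_of_pathCount_ne_zero {y z : V} {ℓ : ℕ} (hℓ : 1 ≤ ℓ)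
    (h : pathCount Ψ x y z ℓ ≠ 0) : y ∉ x := by
  rw [pathCount_eq_ncard_pathSet] at h
  obtain ⟨l, hlen, -, -, hy, -, hchain⟩ := Set.nonempty_of_ncard_ne_zero h
  rcases l with _ | ⟨a, _ | ⟨b, t⟩⟩
  · simp at hy
  · simp at hlen; omega
  · simp only [List.head?_cons, Option.some.injEq] at hy
    subst hy
    obtain ⟨e, -, -, he⟩ := mem_link_edges.1 (List.isChain_cons_cons.1 hchain).1
    have : a ∈ e \ x := he ▸ by simp
    exact (mem_sdiff.1 this).2

lemma pathCount_le_pathCount_add {Φ Ψ : Constellation V} {a b X T : Finset V} {y z : V} {ℓ : ℕ}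
    (hℓ : 1 ≤ ℓ) (hW : Ψ.W b = Φ.W a \ X) (hWT : Φ.W a ⊆ T)
    (hE : ∀ p ∈ (Φ.link a).edges, Disjoint p X → p ∈ (Ψ.link b).edges)
    (hy : y ∉ X) (hz : z ∉ X) :
    pathCount Φ a y z ℓ ≤ pathCount Ψ b y z ℓ + (ℓ - 1) * #X * #T ^ (ℓ - 2) := by
  set M := {l ∈ listsOver T (ℓ - 1) | ∃ v ∈ l, v ∈ X}
  have hM : M.Finite := (listsOver_finite T _).subset fun _ hl => hl.1
  have hcover : Φ.pathSet a y z ℓ ⊆ Ψ.pathSet b y z ℓ ∪ (fun m => y :: (m ++ [z])) '' M := by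
    rintro l ⟨hlen, hnd, hlW, hly, hlz, hchain⟩
    by_cases hlX : ∀ v ∈ l, v ∉ X
    · refine Or.inl ⟨hlen, hnd, fun v hv => hW ▸ mem_sdiff.2 ⟨hlW v hv, hlX v hv⟩, hly, hlz, ?_⟩
      refine List.IsChain.imp_of_mem_imp (fun u v hu hv huv => hE _ huv ?_) hchain
      simp [hlX u hu, hlX v hv]
    · push Not at hlX
      obtain ⟨v, hv, hvX⟩ := hlX
      have hl := List.eq_cons_append_of_head?_of_getLast? (by omega) hly hlz
      have hmid : l.tail.dropLast.Sublist l :=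
        (List.dropLast_sublist _).trans (List.tail_sublist _)
      refine Or.inr ⟨l.tail.dropLast, ⟨⟨by simp [hlen],
        fun w hw => hWT (hlW w (hmid.mem hw))⟩, v, ?_, hvX⟩, hl.symm⟩
      rw [hl] at hv
      simp only [List.mem_cons, List.mem_append, List.not_mem_nil, or_false] at hv
      rcases hv with rfl | hv | rfl
      exacts [absurd hvX hy, hv, absurd hvX hz]
  rw [pathCount_eq_ncard_pathSet, pathCount_eq_ncard_pathSet]
  calc (Φ.pathSet a y z ℓ).ncard ≤ _ :=
        Set.ncard_le_ncard hcover ((Ψ.pathSet_finite b y z ℓ).union (hM.image _))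
    _ ≤ _ := Set.ncard_union_le _ _
    _ ≤ _ := Nat.add_le_add_left ((Set.ncard_image_le hM).trans
      (ncard_listsOver_meeting_le T X _)) _

end Constellation

section Bounds

open Constellation

variable {V : Type*} [DecidableEq V] {Ψ : Constellation V} {S X x : Finset V}

lemma IsUniformConst.link {k : ℕ} (h : IsUniformConst k Ψ) (S : Finset V) :
    IsUniformConst (k - #S) (Ψ.link S) := by
  intro f hf
  obtain ⟨e, he, hSe, rfl⟩ := mem_link_edges.1 hf
  exact ⟨sdiff_subset_sdiff (h e he).1 subset_rfl, by rw [card_sdiff_of_subset hSe, (h e he).2]⟩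

lemma IsUniformConst.remove {k : ℕ} (h : IsUniformConst k Ψ) (X : Finset V) :
    IsUniformConst k (Ψ.remove X) := fun f hf =>
  ⟨subset_inter ((mem_remove_edges.1 hf).2.trans sdiff_subset) (mem_remove_edges.1 hf).2,
    (h f (mem_remove_edges.1 hf).1).2⟩

lemma IsUniformConst.card_filter_subset_le_remove_link {k : ℕ} (h : IsUniformConst k Ψ)
    (hk : 2 ≤ k) (hxS : Disjoint x S) (hxX : Disjoint x X) (hc : #(x ∪ S) = k - 2) :
    #{e ∈ Ψ.edges | x ∪ S ⊆ e} ≤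
      #{f ∈ ((Ψ.link S).remove X).edges | x ⊆ f} + #X * #Ψ.verts := by
  rw [← card_link_edges, ← card_link_edges,
    ← card_filter_add_card_filter_not (fun p => Disjoint p X)]
  refine add_le_add (card_le_card fun p hp => ?_) (card_filter_not_disjoint_le fun p hp => ?_)
  · exact (mem_link_remove_link_edges (fun e he => (h e he).1) hxS hxX).2 (mem_filter.1 hp)
  · obtain ⟨hpV, hpc⟩ := h.link (x ∪ S) p hp
    exact ⟨hpV.trans sdiff_subset, by omega⟩

lemma IsAMConst.le_four_ninths {k : ℕ} {α μ : ℝ} (h : IsAMConst k Ψ α μ) (hk : 2 ≤ k)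
    (hn : k - 2 ≤ #Ψ.verts) (hpos : 0 < #Ψ.verts) : α ≤ 4 / 9 := by
  obtain ⟨x, hxV, hxc⟩ := exists_subset_card_eq hn
  have hdeg := (h.2 x hxV hxc).1
  rw [← card_link_edges] at hdeg
  have hlink : #(Ψ.link x).edges ≤ (#Ψ.verts).choose 2 := by
    rw [← card_powersetCard]
    refine card_le_card fun p hp => mem_powersetCard.2 ?_
    obtain ⟨hpV, hpc⟩ := IsUniformConst.link h.1 x p hp
    exact ⟨hpV.trans sdiff_subset, by omega⟩
  have hchoose : ((#Ψ.verts).choose 2 : ℝ) ≤ (#Ψ.verts : ℝ) ^ 2 / 2 := by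
    simpa using Nat.choose_le_pow_div (α := ℝ) 2 (#Ψ.verts)
  have hsq : (0 : ℝ) < (#Ψ.verts : ℝ) ^ 2 := by positivity
  nlinarith [(Nat.cast_le (α := ℝ)).2 hlink]

lemma IsConst.disjoint_W {k ℓ : ℕ} {α β μ : ℝ} (h : IsConst k Ψ α β ℓ μ) (hα : 0 ≤ α)
    (hβ : 0 < β) (hℓ : 1 ≤ ℓ) (hn : 2 ≤ #Ψ.verts) (hx : x ⊆ Ψ.verts)
    (hxc : #x = k - 2) : Disjoint (Ψ.W x) x := by
  refine disjoint_left.2 fun y hy => ?_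
  have hnR : (2 : ℝ) ≤ #Ψ.verts := by exact_mod_cast hn
  have hW : 1 < #(Ψ.W x) := by
    have := (h.1.2 x hx hxc).2.2.1
    exact_mod_cast (show (1 : ℝ) < #(Ψ.W x) by nlinarith)
  obtain ⟨z, hz, hzy⟩ := exists_mem_ne hW y
  have hpaths := h.2 x hx hxc y hy z hz hzy.symm
  refine notMem_of_pathCount_ne_zero (Ψ := Ψ) (z := z) hℓ fun h0 => ?_
  rw [h0, Nat.cast_zero] at hpaths
  exact (mul_pos hβ (pow_pos (by linarith) _)).not_ge hpaths

lemma IsAMConst.remove_link {k : ℕ} {α μ : ℝ} (h : IsAMConst k Ψ α μ) (hk : 2 ≤ k)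
    (hWdisj : ∀ x ⊆ Ψ.verts, #x = k - 2 → Disjoint (Ψ.W x) x) (hSV : S ⊆ Ψ.verts)
    (hXV : X ⊆ Ψ.verts) (hSX : Disjoint S X) (hS : #S ≤ k - 2) (hα : 0 ≤ α) (hμ : 0 ≤ μ)
    (hX : (#X : ℝ) ≤ α / 4 * #Ψ.verts)
    (hn : (#Ψ.verts : ℝ) ^ 2 ≤ 2 * (#((Ψ.link S).remove X).verts : ℝ) ^ 2) :
    IsAMConst (k - #S) ((Ψ.link S).remove X) (α / 2) (2 * μ) := by
  have hcard := card_remove_link_verts hSV hXV hSX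
  have hn' : (#((Ψ.link S).remove X).verts : ℝ) ≤ #Ψ.verts := by exact_mod_cast (by omega)
  have hn'sq := pow_le_pow_left₀ (Nat.cast_nonneg _) hn' 2
  refine ⟨IsUniformConst.remove (IsUniformConst.link h.1 S) X, fun x hx hxc => ?_⟩
  obtain ⟨⟨hxV, hxS⟩, hxX⟩ := subset_remove_link_verts_iff.1 hx
  have hxSV : x ∪ S ⊆ Ψ.verts := union_subset hxV hSV
  have hxSc : #(x ∪ S) = k - 2 := by rw [card_union_of_disjoint hxS]; omega
  obtain ⟨hdeg, hWV, hWc, hcross⟩ := h.2 _ hxSV hxSc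
  have hWVS : Ψ.W (x ∪ S) ⊆ Ψ.verts \ S :=
    subset_sdiff.2 ⟨hWV, (hWdisj _ hxSV hxSc).mono_right subset_union_right⟩
  refine ⟨?_, ?_, ?_, ?_⟩
  · have hlost : (#{e ∈ Ψ.edges | x ∪ S ⊆ e} : ℝ) ≤
        #{f ∈ ((Ψ.link S).remove X).edges | x ⊆ f} + #X * #Ψ.verts := by
      exact_mod_cast h.1.card_filter_subset_le_remove_link hk hxS hxX hxSc
    nlinarith [mul_le_mul_of_nonneg_right hX (Nat.cast_nonneg (#Ψ.verts))]
  · rw [remove_link_W hWVS, remove_link_verts]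
    exact sdiff_subset_sdiff hWVS subset_rfl
  · rw [remove_link_W hWVS]
    have hlost : (#(Ψ.W (x ∪ S)) : ℝ) ≤ #(Ψ.W (x ∪ S) \ X) + #X := by
      exact_mod_cast card_le_card_sdiff_add_card
    nlinarith
  · calc (crossCount ((Ψ.link S).remove X) x : ℝ) ≤ crossCount Ψ (x ∪ S) := by
          exact_mod_cast crossCount_remove_link_le (fun e he => (h.1 e he).1) hxS hxX hWVS
      _ ≤ 2 * μ * (#((Ψ.link S).remove X).verts : ℝ) ^ 2 := by nlinarith

lemma IsConst.pathCount_remove_link {k ℓ : ℕ} {α β μ : ℝ} (h : IsConst k Ψ α β ℓ μ)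
    (hℓ : 2 ≤ ℓ) (hWdisj : ∀ x ⊆ Ψ.verts, #x = k - 2 → Disjoint (Ψ.W x) x) (hSV : S ⊆ Ψ.verts)
    (hS : #S ≤ k - 2) (hβ : 0 ≤ β) (hX : 2 * ℓ * (#X : ℝ) ≤ β * #Ψ.verts)
    (hx : x ⊆ ((Ψ.link S).remove X).verts) (hxc : #x = k - #S - 2) {y z : V}
    (hy : y ∈ ((Ψ.link S).remove X).W x) (hz : z ∈ ((Ψ.link S).remove X).W x) (hyz : y ≠ z) :
    β / 2 * (#((Ψ.link S).remove X).verts : ℝ) ^ (ℓ - 1) ≤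
      pathCount ((Ψ.link S).remove X) x y z ℓ := by
  obtain ⟨⟨hxV, hxS⟩, hxX⟩ := subset_remove_link_verts_iff.1 hx
  have hxSV : x ∪ S ⊆ Ψ.verts := union_subset hxV hSV
  have hxSc : #(x ∪ S) = k - 2 := by rw [card_union_of_disjoint hxS]; omega
  have hWV := (h.1.2 _ hxSV hxSc).2.1
  have hWVS : Ψ.W (x ∪ S) ⊆ Ψ.verts \ S :=
    subset_sdiff.2 ⟨hWV, (hWdisj _ hxSV hxSc).mono_right subset_union_right⟩
  rw [remove_link_W hWVS, mem_sdiff] at hy hz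
  have hold := h.2 _ hxSV hxSc y hy.1 z hz.1 hyz
  have hlost : (pathCount Ψ (x ∪ S) y z ℓ : ℝ) ≤ pathCount ((Ψ.link S).remove X) x y z ℓ +
      (ℓ - 1) * #X * (#Ψ.verts : ℝ) ^ (ℓ - 2) := by
    have := (Nat.cast_le (α := ℝ)).2 <| pathCount_le_pathCount_add (by omega : 1 ≤ ℓ)
      (remove_link_W hWVS) hWV (fun p hp hpX =>
        (mem_link_remove_link_edges (fun e he => (h.1.1 e he).1) hxS hxX).2 ⟨hp, hpX⟩) hy.2 hz.2
    push_cast [Nat.cast_sub (by omega : 1 ≤ ℓ)] at this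
    exact this
  have hn' : (#((Ψ.link S).remove X).verts : ℝ) ^ (ℓ - 1) ≤ (#Ψ.verts : ℝ) ^ (ℓ - 1) := by
    rw [remove_link_verts]
    exact pow_le_pow_left₀ (Nat.cast_nonneg _)
      (by exact_mod_cast card_le_card (sdiff_subset.trans sdiff_subset)) _
  have hpow : (#Ψ.verts : ℝ) ^ (ℓ - 1) = #Ψ.verts ^ (ℓ - 2) * #Ψ.verts := by
    rw [← pow_succ]; congr 1; omega
  have hpos : (0 : ℝ) ≤ #Ψ.verts ^ (ℓ - 2) := by positivity
  have hbad : (ℓ - 1) * #X * (#Ψ.verts : ℝ) ^ (ℓ - 2) ≤ β / 2 * #Ψ.verts ^ (ℓ - 1) := by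
    rw [hpow]
    nlinarith [mul_le_mul_of_nonneg_right hX hpos, (Nat.cast_nonneg (#X) : (0 : ℝ) ≤ #X)]
  nlinarith

end Bounds

theorem stmt14_general {V : Type*} [Fintype V] [DecidableEq V] (k : ℕ) (hk : 2 ≤ k)
    (α β μ : ℝ) (hα : 0 < α) (hβ : 0 < β) (hμ : 0 < μ)
    (ℓ : ℕ) (hℓ : 3 ≤ ℓ)
    (Ψ : Constellation V) (h : IsConst k Ψ α β ℓ μ)
    (hn : 6 * k ≤ Ψ.verts.card)
    (S X : Finset V) (hSV : S ⊆ Ψ.verts) (hXV : X ⊆ Ψ.verts)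
    (hdisj : Disjoint S X) (hS : S.card ≤ k - 2)
    (hX : (X.card : ℝ) ≤ min (α / 4) (β / (2 * (ℓ : ℝ))) * (Ψ.verts.card : ℝ)) :
    IsConst (k - S.card) ((Ψ.link S).remove X) (α / 2) (β / 2) ℓ (2 * μ) := by
  have hcard : (#((Ψ.link S).remove X).verts : ℝ) + #S + #X = #Ψ.verts := by
    exact_mod_cast Constellation.card_remove_link_verts hSV hXV hdisj
  have hSn : (6 * #S : ℝ) ≤ #Ψ.verts := by exact_mod_cast (by omega : 6 * #S ≤ #Ψ.verts)
  have hα49 : α ≤ 4 / 9 := h.1.le_four_ninths hk (by omega) (by omega)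
  have hXα : (#X : ℝ) ≤ α / 4 * #Ψ.verts :=
    hX.trans (mul_le_mul_of_nonneg_right (min_le_left _ _) (Nat.cast_nonneg _))
  have hXβ : 2 * ℓ * (#X : ℝ) ≤ β * #Ψ.verts := by
    have := hX.trans (mul_le_mul_of_nonneg_right (min_le_right _ _) (Nat.cast_nonneg _))
    rw [div_mul_eq_mul_div, le_div_iff₀ (by positivity)] at this
    linarith
  have hWdisj : ∀ x ⊆ Ψ.verts, #x = k - 2 → Disjoint (Ψ.W x) x := fun x hx hxc =>
    h.disjoint_W hα.le hβ (by omega) (by omega) hx hxc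
  have hsq : (#Ψ.verts : ℝ) ^ 2 ≤ 2 * (#((Ψ.link S).remove X).verts : ℝ) ^ 2 := by
    have h13 : 13 / 18 * (#Ψ.verts : ℝ) ≤ #((Ψ.link S).remove X).verts := by
      nlinarith [mul_le_mul_of_nonneg_right hα49 (Nat.cast_nonneg (#Ψ.verts) : (0 : ℝ) ≤ _)]
    nlinarith [mul_le_mul h13 h13 (by positivity) (Nat.cast_nonneg _)]
  exact ⟨h.1.remove_link hk hWdisj hSV hXV hdisj hS hα.le hμ.le hXα hsq,
    fun x hx hxc y hy z hz hyz => h.pathCount_remove_link (by omega) hWdisj hSV hS hβ.le hXβ hx hxc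
      hy hz hyz⟩

/-- Lemma 2.26: with `θ = min{α/4, β/(2ℓ)}`, if `Ψ` is a `k`-uniform `(α, β, ℓ, μ)`-constellation
on `n ≥ 6k` vertices and `S, X ⊆ V(Ψ)` are disjoint with `|S| ≤ k-2`, `|X| ≤ θn`, then
`Ψ_S − X` is an `(α/2, β/2, ℓ, 2μ)`-constellation (of uniformity `k - |S|`). -/
theorem stmt14 {V : Type*} [Fintype V] [DecidableEq V] (k : ℕ) (hk : 2 ≤ k)
    (α β μ : ℝ) (hα : 0 < α) (hβ : 0 < β) (hμ : 0 < μ)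
    (ℓ : ℕ) (hℓ : 3 ≤ ℓ) (hodd : Odd ℓ)
    (Ψ : Constellation V) (h : IsConst k Ψ α β ℓ μ)
    (hn : 6 * k ≤ Ψ.verts.card)
    (S X : Finset V) (hSV : S ⊆ Ψ.verts) (hXV : X ⊆ Ψ.verts)
    (hdisj : Disjoint S X) (hS : S.card ≤ k - 2)
    (hX : (X.card : ℝ) ≤ min (α / 4) (β / (2 * (ℓ : ℝ))) * (Ψ.verts.card : ℝ)) :
    IsConst (k - S.card) ((Ψ.link S).remove X) (α / 2) (β / 2) ℓ (2 * μ) :=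
  stmt14_general k hk α β μ hα hβ hμ ℓ hℓ Ψ h hn S X hSV hXV hdisj hS hX
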